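/- (Gradient bound for the smooth max-of-norms functional) Let p* = p₁+…+p_K, Γ = (γ₁ᵀ,…,γ_Kᵀ)ᵀ ∈ ℝ^{p*} with γ_j ∈ ℝ^{p_j}, and z_j ≥ √p_j. Define s(Γ) = ∑_{j=1}^K exp(β(‖γ_j‖² − z_j²)/(2z_j)) and h_β(s(Γ)) = β⁻¹ log s(Γ). Then ∑_{q,l=1}^{p*} |∂_q h_β(s(Γ)) · ∂_l h_β(s(Γ))| ≤ max_{1≤j≤K} ‖γ_j‖², where ∂_q denotes the partial derivative with respect to the q-th coordinate of Γ. -/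

import Mathlib

/-!
The double sum of `|∂_q h ∂_l h|` is the square of `∑_q |∂_q h|`. With the softmax weights
`w_j = e_j / ∑ e` this sum splits by blocks as `∑_j w_j (∑_i |γ_j^i|) / z_j`, and Cauchy–Schwarz
together with `z_j ≥ √p_j` bounds each block term by `‖γ_j‖`. So `∑_q |∂_q h|` is a convex
combination of the `‖γ_j‖`, hence at most `max_j ‖γ_j‖`, and squaring gives the claim.
-/

open Finset

theorem Finset.sum_sum_abs_mul_eq_sq {α R : Type*} [CommRing R] [LinearOrder R]
    [IsStrictOrderedRing R] (s : Finset α) (f : α → R) :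
    ∑ q ∈ s, ∑ l ∈ s, |f q * f l| = (∑ q ∈ s, |f q|) ^ 2 := by
  simp only [sq, sum_mul_sum, abs_mul]

theorem Finset.sum_mul_le_sup' {ι R : Type*} [CommSemiring R] [LinearOrder R] [IsOrderedRing R]
    {s : Finset ι} (hs : s.Nonempty) (w a : ι → R) (hw : ∀ j ∈ s, 0 ≤ w j)
    (hw₁ : ∑ j ∈ s, w j = 1) : ∑ j ∈ s, w j * a j ≤ s.sup' hs a :=
  calc ∑ j ∈ s, w j * a j ≤ ∑ j ∈ s, w j * s.sup' hs a :=
        sum_le_sum fun j hj => mul_le_mul_of_nonneg_left (le_sup' a hj) (hw j hj)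
    _ = s.sup' hs a := by rw [← sum_mul, hw₁, one_mul]

namespace EuclideanSpace

variable {ι : Type*} [Fintype ι]

theorem sum_abs_le_sqrt_card_mul_norm (x : EuclideanSpace ℝ ι) :
    ∑ i, |x i| ≤ √(Fintype.card ι) * ‖x‖ := by
  rw [← Real.sqrt_sq (norm_nonneg x), ← Real.sqrt_mul (Nat.cast_nonneg _), real_norm_sq_eq]
  refine Real.le_sqrt_of_sq_le ?_
  simpa only [sq_abs, card_univ] using
    sq_sum_le_card_mul_sum_sq (s := univ) (f := fun i => |x i|)

theorem sum_abs_div_le_norm (x : EuclideanSpace ℝ ι) {c : ℝ} (hc : √(Fintype.card ι) ≤ c) :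
    (∑ i, |x i|) / c ≤ ‖x‖ := by
  rcases (Real.sqrt_nonneg _ |>.trans hc).eq_or_lt with hc₀ | hc₀
  · rw [← hc₀, div_zero]
    exact norm_nonneg x
  · rw [div_le_iff₀ hc₀, mul_comm]
    exact (sum_abs_le_sqrt_card_mul_norm x).trans (by gcongr)

end EuclideanSpace

theorem sum_abs_softmax_mul_div_le_sup'_norm {ι : Type*} [Fintype ι] {κ : ι → Type*}
    [∀ j, Fintype (κ j)] (hne : (univ : Finset ι).Nonempty) (e c : ι → ℝ) (he : ∀ j, 0 < e j)
    (hc : ∀ j, √(Fintype.card (κ j)) ≤ c j) (g : (j : ι) → EuclideanSpace ℝ (κ j)) :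
    ∑ q : (j : ι) × κ j, |(∑ j, e j)⁻¹ * (g q.1 q.2 / c q.1) * e q.1| ≤
      univ.sup' hne fun j => ‖g j‖ := by
  set S := ∑ j, e j
  have hS : 0 < S := sum_pos (fun j _ => he j) hne
  calc ∑ q : (j : ι) × κ j, |S⁻¹ * (g q.1 q.2 / c q.1) * e q.1|
      = ∑ j, e j / S * ((∑ i, |g j i|) / c j) := by
        rw [Fintype.sum_sigma]
        refine sum_congr rfl fun j _ => ?_
        have hc₀ : 0 ≤ c j := (Real.sqrt_nonneg _).trans (hc j)
        simp only [sum_div, mul_sum, abs_mul, abs_div, abs_inv, abs_of_pos hS, abs_of_pos (he j),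
          abs_of_nonneg hc₀]
        exact sum_congr rfl fun i _ => by ring
    _ ≤ ∑ j, e j / S * ‖g j‖ := by
        gcongr with j
        · exact div_nonneg (he j).le hS.le
        · exact EuclideanSpace.sum_abs_div_le_norm (g j) (hc j)
    _ ≤ univ.sup' hne fun j => ‖g j‖ :=
        sum_mul_le_sup' hne _ _ (fun j _ => div_nonneg (he j).le hS.le)
          (by rw [← sum_div, div_self hS.ne'])

theorem smooth_max_gradient_bound_general
    (K : ℕ) (hK : 0 < K) (p : Fin K → ℕ)
    (β : ℝ) (z : Fin K → ℝ)
    (hz : ∀ j, Real.sqrt (p j) ≤ z j)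
    (Γ : (j : Fin K) → EuclideanSpace ℝ (Fin (p j))) :
    (∑ q : (j : Fin K) × Fin (p j), ∑ l : (j : Fin K) × Fin (p j),
        |((∑ j, Real.exp (β * (‖Γ j‖ ^ 2 - z j ^ 2) / (2 * z j)))⁻¹ *
            (Γ q.1 q.2 / z q.1) *
            Real.exp (β * (‖Γ q.1‖ ^ 2 - z q.1 ^ 2) / (2 * z q.1))) *
          ((∑ j, Real.exp (β * (‖Γ j‖ ^ 2 - z j ^ 2) / (2 * z j)))⁻¹ *
            (Γ l.1 l.2 / z l.1) *
            Real.exp (β * (‖Γ l.1‖ ^ 2 - z l.1 ^ 2) / (2 * z l.1)))|) ≤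
      Finset.univ.sup'
        (Finset.univ_nonempty_iff.mpr (Fin.pos_iff_nonempty.mp hK))
        (fun j => ‖Γ j‖ ^ 2) := by
  set hne := Finset.univ_nonempty_iff.mpr (Fin.pos_iff_nonempty.mp hK)
  have hz_card : ∀ j, √(Fintype.card (Fin (p j))) ≤ z j := by simpa only [Fintype.card_fin] using hz
  obtain ⟨j₀, -, hj₀⟩ := exists_mem_eq_sup' hne fun j => ‖Γ j‖
  rw [sum_sum_abs_mul_eq_sq]
  calc _ ≤ (univ.sup' hne fun j => ‖Γ j‖) ^ 2 := by
        gcongr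
        exact sum_abs_softmax_mul_div_le_sup'_norm hne _ z (fun j => Real.exp_pos _) hz_card Γ
    _ = ‖Γ j₀‖ ^ 2 := by rw [hj₀]
    _ ≤ _ := le_sup' (fun j => ‖Γ j‖ ^ 2) (mem_univ j₀)

/-- Gradient bound for the smooth max-of-norms functional: with
`s(Γ) = ∑_j exp(β(‖γ_j‖² − z_j²)/(2 z_j))` and the partial derivatives
`∂_q h_β(s(Γ)) = s(Γ)⁻¹ (γ^q / z_{j(q)}) exp(β(‖γ_{j(q)}‖² − z_{j(q)}²)/(2 z_{j(q)}))`,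
one has `∑_{q,l} |∂_q h_β(s(Γ)) ∂_l h_β(s(Γ))| ≤ max_j ‖γ_j‖²` whenever
`z_j ≥ √p_j`. -/
theorem smooth_max_gradient_bound
    (K : ℕ) (hK : 0 < K) (p : Fin K → ℕ) (hp : ∀ j, 1 ≤ p j)
    (β : ℝ) (hβ : 0 < β) (z : Fin K → ℝ)
    (hz : ∀ j, Real.sqrt (p j) ≤ z j)
    (Γ : (j : Fin K) → EuclideanSpace ℝ (Fin (p j))) :
    (∑ q : (j : Fin K) × Fin (p j), ∑ l : (j : Fin K) × Fin (p j),
        |((∑ j, Real.exp (β * (‖Γ j‖ ^ 2 - z j ^ 2) / (2 * z j)))⁻¹ *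
            (Γ q.1 q.2 / z q.1) *
            Real.exp (β * (‖Γ q.1‖ ^ 2 - z q.1 ^ 2) / (2 * z q.1))) *
          ((∑ j, Real.exp (β * (‖Γ j‖ ^ 2 - z j ^ 2) / (2 * z j)))⁻¹ *
            (Γ l.1 l.2 / z l.1) *
            Real.exp (β * (‖Γ l.1‖ ^ 2 - z l.1 ^ 2) / (2 * z l.1)))|) ≤
      Finset.univ.sup'
        (Finset.univ_nonempty_iff.mpr (Fin.pos_iff_nonempty.mp hK))
        (fun j => ‖Γ j‖ ^ 2) :=
  smooth_max_gradient_bound_general K hK p β z hz Γ
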